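/- Let W be a real random variable with law N(0, T), and define X := log s0 + (r − σ0²/2)T + σ0 W. Then E[ W · 1_{X > log K} e^{X} ] = s0 e^{rT} ( σ0 T Φ(d₊) + √T φ(d₊) ). -/

import Mathlib

open Set Real MeasureTheory ProbabilityTheory

/-- The standard normal density. -/
noncomputable def stdNormalPDF (x : ℝ) : ℝ :=
  (Real.sqrt (2 * Real.pi))⁻¹ * Real.exp (-x ^ 2 / 2)

/-- The standard normal cumulative distribution function. -/
noncomputable def stdNormalCDF (x : ℝ) : ℝ :=
  ∫ y in Set.Iio x, stdNormalPDF y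

/-!
Multiplying the `N(μ, v)` density by `exp (c x)` completes the square: it becomes
`exp (c μ + c² v / 2)` times the `N(μ + c v, v)` density. With `W ~ N(0, T)` and `c = σ0` the
expectation is therefore a truncated first moment `∫_{x > m} x p(x) dx` of a Gaussian density `p`
with mean `μ` and variance `v`, and this equals `μ P(X > m) + v p(m)` because
`(x - μ) p(x) = -v p'(x)`.
-/

open Filter Topology
open scoped NNReal

lemma stdNormalPDF_neg (x : ℝ) : stdNormalPDF (-x) = stdNormalPDF x := by
  simp [stdNormalPDF]

lemma gaussianPDFReal_eq_stdNormalPDF (μ : ℝ) (v : ℝ≥0) (x : ℝ) :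
    gaussianPDFReal μ v x = (√v)⁻¹ * stdNormalPDF ((x - μ) / √v) := by
  rw [gaussianPDFReal, stdNormalPDF, sqrt_mul (by positivity), div_pow,
    sq_sqrt v.coe_nonneg, mul_inv]
  ring_nf

lemma setIntegral_Ioi_stdNormalPDF (c : ℝ) :
    ∫ y in Ioi c, stdNormalPDF y = stdNormalCDF (-c) := by
  have h := integral_comp_neg_Ioi c stdNormalPDF
  simp only [stdNormalPDF_neg] at h
  rw [h, stdNormalCDF, integral_Iic_eq_integral_Iio]

lemma setIntegral_Ioi_comp_sub_right {E : Type*} [NormedAddCommGroup E] [NormedSpace ℝ E]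
    (g : ℝ → E) (a m : ℝ) :
    ∫ x in Ioi m, g (x - a) = ∫ y in Ioi (m - a), g y := by
  rw [← integral_indicator measurableSet_Ioi, ← integral_indicator measurableSet_Ioi,
    ← integral_sub_right_eq_self ((Ioi (m - a)).indicator g) a]
  congr 1 with x
  simp [indicator]

lemma setIntegral_Ioi_comp_sub_div {E : Type*} [NormedAddCommGroup E] [NormedSpace ℝ E]
    (g : ℝ → E) (a m : ℝ) {s : ℝ} (hs : 0 < s) :
    ∫ x in Ioi m, g ((x - a) / s) = s • ∫ y in Ioi ((m - a) / s), g y := by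
  rw [setIntegral_Ioi_comp_sub_right (fun x => g (x / s))]
  simp_rw [div_eq_mul_inv]
  rw [integral_comp_mul_right_Ioi _ _ (inv_pos.2 hs), inv_inv]

lemma setIntegral_Ioi_gaussianPDFReal (μ : ℝ) {v : ℝ≥0} (hv : v ≠ 0) (m : ℝ) :
    ∫ x in Ioi m, gaussianPDFReal μ v x = stdNormalCDF ((μ - m) / √v) := by
  have hs : 0 < √(v : ℝ) := sqrt_pos.2 (by positivity)
  simp_rw [gaussianPDFReal_eq_stdNormalPDF]
  rw [integral_const_mul, setIntegral_Ioi_comp_sub_div _ _ _ hs, setIntegral_Ioi_stdNormalPDF,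
    smul_eq_mul, inv_mul_cancel_left₀ hs.ne', ← neg_div, neg_sub]

lemma hasDerivAt_gaussianPDFReal (μ : ℝ) (v : ℝ≥0) (x : ℝ) :
    HasDerivAt (gaussianPDFReal μ v) (-((x - μ) / v) * gaussianPDFReal μ v x) x := by
  have h : HasDerivAt (fun y : ℝ => -(y - μ) ^ 2 / (2 * v)) (-((x - μ) / v)) x := by
    refine ((((hasDerivAt_id' x).sub_const μ).fun_pow 2).fun_neg.div_const _).congr_deriv ?_
    ring
  exact (h.exp.const_mul _).congr_deriv (by rw [gaussianPDFReal]; ring)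

lemma tendsto_gaussianPDFReal_atTop (μ : ℝ) {v : ℝ≥0} (hv : v ≠ 0) :
    Tendsto (gaussianPDFReal μ v) atTop (𝓝 0) := by
  have h : Tendsto (fun x : ℝ => -(x - μ) ^ 2 / (2 * v)) atTop atBot :=
    (tendsto_neg_atBot_iff.2 <| (tendsto_pow_atTop two_ne_zero).comp
      (tendsto_atTop_add_const_right _ (-μ) tendsto_id)).atBot_div_const (by positivity)
  have := (tendsto_exp_atBot.comp h).const_mul (√(2 * π * v))⁻¹
  rw [mul_zero] at this
  exact this

lemma integrable_sub_mul_gaussianPDFReal (μ : ℝ) (v : ℝ≥0) :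
    Integrable (fun x => (x - μ) * gaussianPDFReal μ v x) := by
  rcases eq_or_ne v 0 with rfl | hv
  · simp
  have h := (integrable_mul_exp_neg_mul_sq (b := (2 * v : ℝ)⁻¹) (by positivity)).comp_sub_right μ
  refine (h.const_mul (√(2 * π * v))⁻¹).congr (ae_of_all _ fun x => ?_)
  simp only [gaussianPDFReal, neg_mul, inv_mul_eq_div, ← neg_div]
  ring

lemma setIntegral_Ioi_sub_mul_gaussianPDFReal (μ : ℝ) {v : ℝ≥0} (hv : v ≠ 0) (m : ℝ) :
    ∫ x in Ioi m, (x - μ) * gaussianPDFReal μ v x = v * gaussianPDFReal μ v m := by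
  have hderiv : ∀ x ∈ Ici m, HasDerivAt (fun x => -(v : ℝ) * gaussianPDFReal μ v x)
      ((x - μ) * gaussianPDFReal μ v x) x := fun x _ =>
    ((hasDerivAt_gaussianPDFReal μ v x).const_mul _).congr_deriv (by field_simp)
  have hlim := (tendsto_gaussianPDFReal_atTop μ hv).const_mul (-(v : ℝ))
  rw [mul_zero] at hlim
  rw [integral_Ioi_of_hasDerivAt_of_tendsto' hderiv
    (integrable_sub_mul_gaussianPDFReal μ v).integrableOn hlim]
  ring

lemma setIntegral_Ioi_id_mul_gaussianPDFReal (μ : ℝ) {v : ℝ≥0} (hv : v ≠ 0) (m : ℝ) :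
    ∫ x in Ioi m, x * gaussianPDFReal μ v x =
      μ * stdNormalCDF ((μ - m) / √v) + v * gaussianPDFReal μ v m := by
  have hsplit (x : ℝ) : x * gaussianPDFReal μ v x =
      μ * gaussianPDFReal μ v x + (x - μ) * gaussianPDFReal μ v x := by ring
  rw [setIntegral_congr_fun measurableSet_Ioi fun x _ => hsplit x,
    integral_add ((integrable_gaussianPDFReal μ v).integrableOn.const_mul μ)
      (integrable_sub_mul_gaussianPDFReal μ v).integrableOn,
    integral_const_mul, setIntegral_Ioi_gaussianPDFReal μ hv,
    setIntegral_Ioi_sub_mul_gaussianPDFReal μ hv]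

lemma gaussianPDFReal_mul_exp (μ : ℝ) (v : ℝ≥0) (c x : ℝ) :
    gaussianPDFReal μ v x * exp (c * x) =
      exp (c * μ + c ^ 2 * v / 2) * gaussianPDFReal (μ + c * v) v x := by
  rcases eq_or_ne v 0 with rfl | hv
  · simp
  simp only [gaussianPDFReal]
  rw [mul_assoc, ← exp_add, mul_left_comm, ← exp_add]
  congr 2
  field_simp
  ring

lemma integral_id_mul_indicator_exp_gaussianReal (μ : ℝ) {v : ℝ≥0} (hv : v ≠ 0)
    (c m : ℝ) :
    ∫ x, x * (Ioi m).indicator (fun x => exp (c * x)) x ∂gaussianReal μ v =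
      exp (c * μ + c ^ 2 * v / 2) * ((μ + c * v) * stdNormalCDF ((μ + c * v - m) / √v)
        + v * gaussianPDFReal (μ + c * v) v m) := by
  have h (x : ℝ) : gaussianPDFReal μ v x • (x * (Ioi m).indicator (fun x => exp (c * x)) x) =
      (Ioi m).indicator
        (fun x => exp (c * μ + c ^ 2 * v / 2) * (x * gaussianPDFReal (μ + c * v) v x)) x := by
    by_cases hx : x ∈ Ioi m
    · rw [indicator_of_mem hx, indicator_of_mem hx, smul_eq_mul, mul_left_comm,
        gaussianPDFReal_mul_exp]
      ring
    · simp [hx]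
  rw [integral_gaussianReal_eq_integral_smul hv]
  simp_rw [h]
  rw [integral_indicator measurableSet_Ioi, integral_const_mul,
    setIntegral_Ioi_id_mul_gaussianPDFReal _ hv]

lemma indicator_Ioi_exp_add_mul (a L : ℝ) {σ : ℝ} (hσ : 0 < σ) (x : ℝ) :
    (Ioi L).indicator (fun x => exp x) (a + σ * x) =
      exp a * (Ioi ((L - a) / σ)).indicator (fun x => exp (σ * x)) x := by
  have hmem : a + σ * x ∈ Ioi L ↔ x ∈ Ioi ((L - a) / σ) := by
    rw [mem_Ioi, mem_Ioi, div_lt_iff₀ hσ]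
    constructor <;> intro <;> linarith
  by_cases hx : x ∈ Ioi ((L - a) / σ)
  · rw [indicator_of_mem (hmem.2 hx), indicator_of_mem hx, exp_add]
  · rw [indicator_of_notMem (mt hmem.1 hx), indicator_of_notMem hx, mul_zero]

theorem expectation_W_indicator_exp_gaussian_general
    {Ω : Type*} [MeasurableSpace Ω] (P : Measure Ω)
    (s0 K σ0 T r : ℝ) (hs0 : 0 < s0) (hK : 0 < K) (hσ0 : 0 < σ0) (hT : 0 < T)
    (W : Ω → ℝ)
    (hW : Measure.map W P = gaussianReal 0 (Real.toNNReal T)) :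
    ∫ ω, W ω * Set.indicator (Set.Ioi (Real.log K)) (fun x => Real.exp x)
        (Real.log s0 + (r - σ0 ^ 2 / 2) * T + σ0 * W ω) ∂P =
      s0 * Real.exp (r * T) *
        (σ0 * T * stdNormalCDF ((Real.log (s0 / K) + (r + σ0 ^ 2 / 2) * T) / (σ0 * Real.sqrt T))
          + Real.sqrt T *
            stdNormalPDF ((Real.log (s0 / K) + (r + σ0 ^ 2 / 2) * T) / (σ0 * Real.sqrt T))) := by
  set a := log s0 + (r - σ0 ^ 2 / 2) * T
  set d := (log (s0 / K) + (r + σ0 ^ 2 / 2) * T) / (σ0 * √T)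
  have hv : T.toNNReal ≠ 0 := by simpa using hT
  have hTv : (T.toNNReal : ℝ) = T := coe_toNNReal _ hT.le
  have hWae : AEMeasurable W P :=
    .of_map_ne_zero (by rw [hW]; exact IsProbabilityMeasure.ne_zero _)
  have hd : (0 + σ0 * T - (log K - a) / σ0) / √T = d := by
    simp only [d, a]
    rw [log_div hs0.ne' hK.ne']
    field_simp
    ring
  have hexp : exp a * exp (σ0 * 0 + σ0 ^ 2 * T.toNNReal / 2) = s0 * exp (r * T) := by
    rw [← exp_add, hTv, show a + (σ0 * 0 + σ0 ^ 2 * T / 2) = log s0 + r * T by ring, exp_add,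
      exp_log hs0]
  calc _ = ∫ x, x * (Ioi (log K)).indicator (fun x => exp x) (a + σ0 * x) ∂P.map W :=
        (integral_map hWae (measurable_id.mul ((measurable_exp.indicator measurableSet_Ioi).comp
          (by fun_prop))).aestronglyMeasurable).symm
    _ = exp a * ∫ x, x * (Ioi ((log K - a) / σ0)).indicator (fun x => exp (σ0 * x)) x
          ∂gaussianReal 0 T.toNNReal := by
        simp_rw [hW, indicator_Ioi_exp_add_mul a _ hσ0, mul_left_comm _ (exp a),
          integral_const_mul]
    _ = _ := by
        rw [integral_id_mul_indicator_exp_gaussianReal 0 hv, ← mul_assoc, hexp,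
          gaussianPDFReal_eq_stdNormalPDF, hTv, hd, ← neg_sub, neg_div, hd, stdNormalPDF_neg,
          ← mul_assoc T, ← div_eq_mul_inv, div_sqrt, zero_add]

/-- If `W` has law `N(0, T)` and `X = log s0 + (r − σ0²/2)T + σ0 W`, then
`E[W 1_{X > log K} e^X] = s0 e^{rT} (σ0 T Φ(d₊) + √T φ(d₊))`. -/
theorem expectation_W_indicator_exp_gaussian
    {Ω : Type*} [MeasurableSpace Ω] (P : Measure Ω) [IsProbabilityMeasure P]
    (s0 K σ0 T r : ℝ) (hs0 : 0 < s0) (hK : 0 < K) (hσ0 : 0 < σ0) (hT : 0 < T)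
    (W : Ω → ℝ) (hWmeas : Measurable W)
    (hW : Measure.map W P = gaussianReal 0 (Real.toNNReal T)) :
    ∫ ω, W ω * Set.indicator (Set.Ioi (Real.log K)) (fun x => Real.exp x)
        (Real.log s0 + (r - σ0 ^ 2 / 2) * T + σ0 * W ω) ∂P =
      s0 * Real.exp (r * T) *
        (σ0 * T * stdNormalCDF ((Real.log (s0 / K) + (r + σ0 ^ 2 / 2) * T) / (σ0 * Real.sqrt T))
          + Real.sqrt T *
            stdNormalPDF ((Real.log (s0 / K) + (r + σ0 ^ 2 / 2) * T) / (σ0 * Real.sqrt T))) :=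
  expectation_W_indicator_exp_gaussian_general P s0 K σ0 T r hs0 hK hσ0 hT W hW
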